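/- arXiv:1307.7387 — 2 statements merged into one kernel-verified Lean document; each statement's English description precedes it below -/
import Mathlib

section
/- Let κ be a regular uncountable cardinal, let U be a high-jump measure on P_κλ with clearance θ, and let λ' be a cardinal with θ ≤ λ' ≤ λ. Define U' on P_κλ' by: X ∈ U' if and only if {A ∈ P_κλ : A ∩ λ' ∈ X} ∈ U. Then U' is a high-jump measure on P_κλ', and the clearance of U' is again θ. -/
open Set

set_option autoImplicit false

/-- The order type of a set of ordinals, as an ordinal. -/
noncomputable def ot (A : Set Ordinal.{0}) : Ordinal.{0} :=
  sInf {o : Ordinal.{0} | Ordinal.lift.{1} o = Ordinal.type ((· < ·) : A → A → Prop)}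

/-- `Pset κ lam` is `P_κ λ`: the collection of subsets of `λ` of cardinality `< κ`. -/
def Pset (κ lam : Ordinal.{0}) : Set (Set Ordinal.{0}) :=
  {A | A ⊆ Set.Iio lam ∧ Cardinal.mk A < Cardinal.lift.{1} κ.card}

/-- `U` is a fine ultrafilter on `P_κ λ`. -/
def IsFine (κ lam : Ordinal.{0}) (U : Ultrafilter (Pset κ lam)) : Prop :=
  ∀ α < lam, {A : Pset κ lam | α ∈ (A : Set Ordinal)} ∈ U

/-- `U` is a normal ultrafilter on `P_κ λ`. -/
def IsNormalUF (κ lam : Ordinal.{0}) (U : Ultrafilter (Pset κ lam)) : Prop :=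
  ∀ g : Pset κ lam → Ordinal.{0},
    {A : Pset κ lam | g A ∈ (A : Set Ordinal)} ∈ U →
      ∃ γ, {A : Pset κ lam | g A = γ} ∈ U

/-- `U` is a normal fine ultrafilter on `P_κ λ`. -/
def IsNormalFine (κ lam : Ordinal.{0}) (U : Ultrafilter (Pset κ lam)) : Prop :=
  IsFine κ lam U ∧ IsNormalUF κ lam U

/-- `f` is (a code for) a function from `κ` to `κ`. -/
def KappaFun (κ : Ordinal.{0}) (f : Ordinal.{0} → Ordinal.{0}) : Prop := ∀ α < κ, f α < κ

/-- `U` is a high-jump measure on `P_κ λ`. -/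
def IsHighJumpMeasure (κ lam : Ordinal.{0}) (U : Ultrafilter (Pset κ lam)) : Prop :=
  IsNormalFine κ lam U ∧
    ∀ f, KappaFun κ f →
      {A : Pset κ lam | f (ot ((A : Set Ordinal) ∩ Set.Iio κ)) < ot (A : Set Ordinal)} ∈ U

/-- `θ` bounds the jump of every `f : κ → κ` with respect to `U`. -/
def ClearanceBound (κ lam : Ordinal.{0}) (U : Ultrafilter (Pset κ lam)) (θ : Ordinal.{0}) : Prop :=
  θ ≤ lam ∧ ∀ f, KappaFun κ f →
    {A : Pset κ lam |
      f (ot ((A : Set Ordinal) ∩ Set.Iio κ)) < ot ((A : Set Ordinal) ∩ Set.Iio θ)} ∈ U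

/-- `θ` is the clearance of the high-jump measure `U`. -/
def IsClearance (κ lam : Ordinal.{0}) (U : Ultrafilter (Pset κ lam)) (θ : Ordinal.{0}) : Prop :=
  ClearanceBound κ lam U θ ∧ ∀ θ', ClearanceBound κ lam U θ' → θ ≤ θ'

/-- An ordinal is a cardinal if it is the initial ordinal of its cardinality. -/
def IsCard (κ : Ordinal.{0}) : Prop := κ.card.ord = κ

/-- `κ` is a regular uncountable cardinal. -/
def RegUncountable (κ : Ordinal.{0}) : Prop :=
  IsCard κ ∧ κ.card.IsRegular ∧ Cardinal.aleph0 < κ.card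

/-!
The hypothesis on `U'` says exactly that `U'` is the image of `U` under the projection
`A ↦ A ∩ λ'`. Fineness and normality pass to images under this projection. Since `κ < θ ≤ λ'`,
the projection leaves `A ∩ κ` and `A ∩ θ'` unchanged for every `θ' ≤ λ'`, so a clearance bound
`θ' ≤ λ'` for `U'` is literally the same condition as for `U`; hence `U'` has clearance `θ`.
Finally any clearance bound already yields the high jump, as `ot (A ∩ θ) ≤ ot A`.
-/

open Ordinal in
lemma lift_ot_of_subset_Iio {A : Set Ordinal.{0}} {b : Ordinal.{0}} (h : A ⊆ Iio b) :
    Ordinal.lift.{1} (ot A) = typeLT A := by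
  have hle : typeLT A ≤ Ordinal.lift.{1} b := by
    rw [← type_lt_Iio b]
    exact Ordinal.type_le_iff'.2 ⟨Subrel.inclusionEmbedding (· < ·) h⟩
  obtain ⟨o, ho⟩ := Ordinal.mem_range_lift_of_le hle
  exact csInf_mem (⟨o, ho⟩ : {o : Ordinal.{0} | Ordinal.lift.{1} o = typeLT A}.Nonempty)

open Ordinal in
lemma ot_mono {X Y : Set Ordinal.{0}} {b : Ordinal.{0}} (hY : Y ⊆ Iio b) (hXY : X ⊆ Y) :
    ot X ≤ ot Y := by
  rw [← Ordinal.lift_le.{1}, lift_ot_of_subset_Iio (hXY.trans hY), lift_ot_of_subset_Iio hY]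
  exact Ordinal.type_le_iff'.2 ⟨Subrel.inclusionEmbedding (· < ·) hXY⟩

lemma inter_Iio_inter_Iio_of_le {A : Set Ordinal.{0}} {δ lam' : Ordinal.{0}} (h : δ ≤ lam') :
    A ∩ Iio lam' ∩ Iio δ = A ∩ Iio δ := by
  rw [inter_assoc, Iio_inter_Iio, min_eq_right h]

namespace Pset

variable {κ lam : Ordinal.{0}}

def restrict (lam' : Ordinal.{0}) (A : Pset κ lam) : Pset κ lam' :=
  ⟨(A : Set Ordinal) ∩ Iio lam',
    inter_subset_right, (Cardinal.mk_le_mk_of_subset inter_subset_left).trans_lt A.2.2⟩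

@[simp]
lemma coe_restrict (lam' : Ordinal.{0}) (A : Pset κ lam) :
    (restrict lam' A : Set Ordinal) = (A : Set Ordinal) ∩ Iio lam' := rfl

lemma subset_Iio (A : Pset κ lam) : (A : Set Ordinal) ⊆ Iio lam := A.2.1

end Pset

section Projection

variable {κ lam : Ordinal.{0}} {U : Ultrafilter (Pset κ lam)}

lemma Ultrafilter.eq_map_restrict {lam' : Ordinal.{0}} {U' : Ultrafilter (Pset κ lam')}
    (hU' : ∀ X : Set (Set Ordinal.{0}),
      {A : Pset κ lam' | (A : Set Ordinal) ∈ X} ∈ U' ↔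
        {A : Pset κ lam | (A : Set Ordinal) ∩ Iio lam' ∈ X} ∈ U) :
    U' = U.map (Pset.restrict lam') := by
  refine Ultrafilter.ext fun s => ?_
  -- `s` is recovered from the family of underlying sets of its members.
  have h : {A : Pset κ lam' | (A : Set Ordinal) ∈ Subtype.val '' s} ∈ U' ↔
      {A : Pset κ lam | (Pset.restrict lam' A : Set Ordinal) ∈ Subtype.val '' s} ∈ U :=
    hU' _
  simp only [Subtype.val_injective.mem_set_image, ofPred_mem_eq] at h
  exact h

lemma IsFine.map_restrict (hU : IsFine κ lam U) {lam' : Ordinal.{0}} (hlam' : lam' ≤ lam) :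
    IsFine κ lam' (U.map (Pset.restrict lam')) := fun α hα =>
  Ultrafilter.mem_map.2 <| Filter.mem_of_superset (hU α (hα.trans_le hlam')) fun _ hA => ⟨hA, hα⟩

lemma IsNormalUF.map_restrict (hU : IsNormalUF κ lam U) (lam' : Ordinal.{0}) :
    IsNormalUF κ lam' (U.map (Pset.restrict lam')) := by
  intro g hg
  obtain ⟨γ, hγ⟩ := hU (g ∘ Pset.restrict lam')
    (Filter.mem_of_superset (Ultrafilter.mem_map.1 hg) fun _ hA => hA.1)
  exact ⟨γ, Ultrafilter.mem_map.2 hγ⟩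

lemma ClearanceBound.lt {θ : Ordinal.{0}} (hθ : ClearanceBound κ lam U θ) : κ < θ := by
  by_contra! hθκ
  obtain ⟨A, hA⟩ := Ultrafilter.nonempty_of_mem (hθ.2 id fun _ h => h)
  exact hA.not_ge <| ot_mono (inter_subset_left.trans (Pset.subset_Iio A))
    (inter_subset_inter_right _ (Iio_subset_Iio hθκ))

lemma isHighJumpMeasure_of_clearanceBound {θ : Ordinal.{0}} (hU : IsNormalFine κ lam U)
    (hθ : ClearanceBound κ lam U θ) : IsHighJumpMeasure κ lam U :=
  ⟨hU, fun f hf => Filter.mem_of_superset (hθ.2 f hf) fun A hA =>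
    hA.trans_le (ot_mono (Pset.subset_Iio A) inter_subset_left)⟩

lemma clearanceBound_map_restrict_iff {lam' θ : Ordinal.{0}} (hκ : κ ≤ lam') (hθ : θ ≤ lam')
    (hlam' : lam' ≤ lam) :
    ClearanceBound κ lam' (U.map (Pset.restrict lam')) θ ↔ ClearanceBound κ lam U θ := by
  simp only [ClearanceBound, Ultrafilter.mem_map, preimage_ofPred_eq, Pset.coe_restrict,
    inter_Iio_inter_Iio_of_le hκ, inter_Iio_inter_Iio_of_le hθ, hθ, hθ.trans hlam', true_and]

lemma IsClearance.map_restrict {lam' θ : Ordinal.{0}} (hθ : IsClearance κ lam U θ)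
    (hθlam' : θ ≤ lam') (hlam' : lam' ≤ lam) :
    IsClearance κ lam' (U.map (Pset.restrict lam')) θ := by
  have hκ : κ ≤ lam' := hθ.1.lt.le.trans hθlam'
  refine ⟨(clearanceBound_map_restrict_iff hκ hθlam' hlam').2 hθ.1, fun θ' hθ' => ?_⟩
  exact hθ.2 θ' ((clearanceBound_map_restrict_iff hκ hθ'.1 hlam').1 hθ')

end Projection

theorem statement0_general (κ lam lam' θ : Ordinal.{0})
    (U : Ultrafilter (Pset κ lam))
    (hU : IsHighJumpMeasure κ lam U) (hθ : IsClearance κ lam U θ)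
    (hθlam' : θ ≤ lam') (hlam'lam : lam' ≤ lam)
    (U' : Ultrafilter (Pset κ lam'))
    (hU' : ∀ X : Set (Set Ordinal.{0}),
      {A : Pset κ lam' | (A : Set Ordinal) ∈ X} ∈ U' ↔
        {A : Pset κ lam | (A : Set Ordinal) ∩ Set.Iio lam' ∈ X} ∈ U) :
    IsHighJumpMeasure κ lam' U' ∧ IsClearance κ lam' U' θ := by
  obtain rfl := Ultrafilter.eq_map_restrict hU'
  have hθ' := hθ.map_restrict hθlam' hlam'lam
  exact ⟨isHighJumpMeasure_of_clearanceBound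
    ⟨hU.1.1.map_restrict hlam'lam, hU.1.2.map_restrict lam'⟩ hθ'.1, hθ'⟩

/-- If `U` is a high-jump measure on `P_κ λ` with clearance `θ`, and
`θ ≤ λ' ≤ λ` is a cardinal, then the projection `U'` of `U` to `P_κ λ'`
(given by `X ∈ U' ↔ {A ∈ P_κ λ : A ∩ λ' ∈ X} ∈ U`) is a high-jump measure on `P_κ λ'`
with clearance again `θ`. -/
theorem statement0 (κ lam lam' θ : Ordinal.{0})
    (hκ : RegUncountable κ) (hκlam : κ ≤ lam)
    (U : Ultrafilter (Pset κ lam))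
    (hU : IsHighJumpMeasure κ lam U) (hθ : IsClearance κ lam U θ)
    (hlam'card : IsCard lam') (hθlam' : θ ≤ lam') (hlam'lam : lam' ≤ lam)
    (U' : Ultrafilter (Pset κ lam'))
    (hU' : ∀ X : Set (Set Ordinal.{0}),
      {A : Pset κ lam' | (A : Set Ordinal) ∈ X} ∈ U' ↔
        {A : Pset κ lam | (A : Set Ordinal) ∩ Set.Iio lam' ∈ X} ∈ U) :
    IsHighJumpMeasure κ lam' U' ∧ IsClearance κ lam' U' θ :=
  statement0_general κ lam lam' θ U hU hθ hθlam' hlam'lam U' hU'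
end

section
/- A cardinal κ is Shelah for supercompactness if and only if for every function f : κ → κ there are a cardinal θ ≥ κ and a normal fine ultrafilter U on P_κθ such that {A ∈ P_κθ : f(ot(A ∩ κ)) ≤ ot(A)} ∈ U; that is, the apparently weaker 'almost-Shelah-for-supercompactness' condition with non-strict inequality is equivalent to being Shelah for supercompactness. -/
open Set

set_option autoImplicit false

/-- `κ` is Shelah for supercompactness: for every `f : κ → κ` there are a cardinal `θ ≥ κ`
and a normal fine ultrafilter `U` on `P_κ θ` with `{A | f(ot(A ∩ κ)) < ot A} ∈ U`. -/
def ShelahForSC (κ : Ordinal.{0}) : Prop :=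
  ∀ f, KappaFun κ f →
    ∃ θ, IsCard θ ∧ κ ≤ θ ∧ ∃ U : Ultrafilter (Pset κ θ), IsNormalFine κ θ U ∧
      {A : Pset κ θ | f (ot ((A : Set Ordinal) ∩ Set.Iio κ)) < ot (A : Set Ordinal)} ∈ U

/-!
Applying the weak condition to `succ ∘ f` gives the strict one for `f`, since `succ x ≤ y` iff
`x < y`; `succ ∘ f` still maps `κ` into `κ` because an infinite cardinal is a limit ordinal.
Finite `κ` cannot occur: by fineness almost every `A ∈ P_κ λ` contains all of `κ`, yet `|A| < κ`.
-/

theorem not_isFine_of_lt_omega0 {κ lam : Ordinal.{0}} (hκ : κ < Ordinal.omega0) (hκlam : κ ≤ lam)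
    (U : Ultrafilter (Pset κ lam)) : ¬ IsFine κ lam U := by
  intro hfine
  have hfin : (Iio κ).Finite := by
    rwa [← Cardinal.lt_aleph0_iff_set_finite, Cardinal.mk_Iio_ordinal, Cardinal.lift_lt_aleph0,
      Ordinal.card_lt_aleph0]
  have hcover : {A : Pset κ lam | Iio κ ⊆ (A : Set Ordinal)} ∈ U := by
    filter_upwards [(Filter.biInter_mem hfin).mpr fun α hα => hfine α (hα.trans_le hκlam)]
      with A hA using fun α hα => mem_iInter₂.mp hA α hα
  obtain ⟨A, hA⟩ := Ultrafilter.nonempty_of_mem hcover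
  exact ((Cardinal.mk_le_mk_of_subset hA).trans_lt A.2.2).ne (Cardinal.mk_Iio_ordinal κ)

theorem KappaFun.succ_comp {κ : Ordinal.{0}} {f : Ordinal.{0} → Ordinal.{0}} (hf : KappaFun κ f)
    (hκ : Order.IsSuccLimit κ) : KappaFun κ (fun α => Order.succ (f α)) :=
  fun α hα => hκ.succ_lt (hf α hα)

theorem IsCard.isSuccLimit {κ : Ordinal.{0}} (hκ : IsCard κ) (hω : Ordinal.omega0 ≤ κ) :
    Order.IsSuccLimit κ := by
  rw [← hκ]
  exact Cardinal.isSuccLimit_ord (Ordinal.aleph0_le_card.mpr hω)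

/-- `κ` is Shelah for supercompactness iff it satisfies the apparently
weaker "almost Shelah for supercompactness" condition with non-strict inequality. -/
theorem statement14 (κ : Ordinal.{0}) (hκ : IsCard κ) :
    ShelahForSC κ ↔
      ∀ f, KappaFun κ f →
        ∃ θ, IsCard θ ∧ κ ≤ θ ∧ ∃ U : Ultrafilter (Pset κ θ), IsNormalFine κ θ U ∧
          {A : Pset κ θ | f (ot ((A : Set Ordinal) ∩ Set.Iio κ)) ≤ ot (A : Set Ordinal)} ∈ U := by
  constructor
  · intro h f hf
    obtain ⟨θ, hθ, hκθ, U, hU, hjump⟩ := h f hf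
    exact ⟨θ, hθ, hκθ, U, hU, by filter_upwards [hjump] with A hA using hA.le⟩
  · intro h f hf
    rcases lt_or_ge κ Ordinal.omega0 with hfin | hinf
    · obtain ⟨θ, -, hκθ, U, hU, -⟩ := h f hf
      exact absurd hU.1 (not_isFine_of_lt_omega0 hfin hκθ U)
    · obtain ⟨θ, hθ, hκθ, U, hU, hjump⟩ := h _ (hf.succ_comp (hκ.isSuccLimit hinf))
      exact ⟨θ, hθ, hκθ, U, hU, by filter_upwards [hjump] with A hA using Order.succ_le_iff.mp hA⟩
end
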